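/- arXiv:quant-ph/0302174 — 2 statements merged into one kernel-verified Lean document; each statement's English description precedes it below -/
import Mathlib

section
/- Let (A_j)_{j∈J} be Kraus operators of a memoryless quantum channel. If a quantum source (ρ_m)_{m≥1} is stationary and strongly mixing, then the transformed family (E^{⊗m}(ρ_m))_{m≥1} is strongly mixing. -/
open Matrix Finset Filter Topology
open scoped ComplexOrder

noncomputable section

/-- `Mat d m` is the algebra of operators on the `m`-fold tensor power of `ℂ^d`,
realized as matrices indexed by words `Fin m → Fin d`. -/
abbrev Mat (d m : ℕ) : Type := Matrix (Fin m → Fin d) (Fin m → Fin d) ℂ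

/-- Kronecker (tensor) product `A ⊗ B` of `A : Mat d m` and `B : Mat d i`. -/
def tens {d m i : ℕ} (A : Mat d m) (B : Mat d i) : Mat d (m + i) :=
  Matrix.of fun x y =>
    A (fun k => x (Fin.castAdd i k)) (fun k => y (Fin.castAdd i k)) *
    B (fun k => x (Fin.natAdd m k)) (fun k => y (Fin.natAdd m k))

/-- A quantum source: each `ρ m` (for `m ≥ 1`) is positive semidefinite with trace 1. -/
def IsQSource (d : ℕ) (ρ : ∀ m, Mat d m) : Prop :=
  ∀ m, 1 ≤ m → (ρ m).PosSemidef ∧ (ρ m).trace = 1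

/-- Consistency: `tr(ρ_m a) = tr(ρ_{m+i} (a ⊗ I^{⊗i}))`. -/
def QConsistent (d : ℕ) (ρ : ∀ m, Mat d m) : Prop :=
  ∀ m i, 1 ≤ m → 1 ≤ i → ∀ a : Mat d m,
    (ρ m * a).trace = (ρ (m + i) * tens a (1 : Mat d i)).trace

/-- Stationarity: `tr(ρ_m a) = tr(ρ_{i+m} (I^{⊗i} ⊗ a))`. -/
def QStationary (d : ℕ) (ρ : ∀ m, Mat d m) : Prop :=
  ∀ m i, 1 ≤ m → 1 ≤ i → ∀ a : Mat d m,
    (ρ m * a).trace = (ρ (i + m) * tens (1 : Mat d i) a).trace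

/-- Ergodicity: Cesàro averages of `tr(ρ_{m+i} (a ⊗ I^{⊗(i-m)} ⊗ b))` converge to
`tr(ρ_m a)·tr(ρ_m b)`. -/
def QErgodic (d : ℕ) (ρ : ∀ m, Mat d m) : Prop :=
  ∀ m, 1 ≤ m → ∀ a b : Mat d m,
    Tendsto (fun n : ℕ =>
        (n : ℂ)⁻¹ * ∑ i ∈ Finset.Icc m n,
          (ρ (m + (i - m) + m) * tens (tens a (1 : Mat d (i - m))) b).trace)
      atTop (nhds ((ρ m * a).trace * (ρ m * b).trace))

/-- Weak mixing. -/
def QWeakMixing (d : ℕ) (ρ : ∀ m, Mat d m) : Prop :=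
  ∀ m, 1 ≤ m → ∀ a b : Mat d m,
    Tendsto (fun n : ℕ =>
        (n : ℝ)⁻¹ * ∑ i ∈ Finset.Icc m n,
          ‖(ρ (m + (i - m) + m) * tens (tens a (1 : Mat d (i - m))) b).trace
            - (ρ m * a).trace * (ρ m * b).trace‖)
      atTop (nhds 0)

/-- Strong mixing. -/
def QStrongMixing (d : ℕ) (ρ : ∀ m, Mat d m) : Prop :=
  ∀ m, 1 ≤ m → ∀ a b : Mat d m,
    Tendsto (fun i : ℕ =>
        (ρ (m + (i - m) + m) * tens (tens a (1 : Mat d (i - m))) b).trace)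
      atTop (nhds ((ρ m * a).trace * (ρ m * b).trace))

/-- The `m`-fold elementary tensor `A_{j 1} ⊗ ⋯ ⊗ A_{j m}` of Kraus operators. -/
def krausPow {d : ℕ} {J : Type} [Fintype J] (A : J → Matrix (Fin d) (Fin d) ℂ)
    {m : ℕ} (j : Fin m → J) : Mat d m :=
  Matrix.of fun x y => ∏ k, A (j k) (x k) (y k)

/-- The induced map `E^{⊗m}` of a memoryless channel with Kraus operators `A`. -/
def channelPow {d : ℕ} {J : Type} [Fintype J] (A : J → Matrix (Fin d) (Fin d) ℂ)
    (m : ℕ) (σ : Mat d m) : Mat d m :=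
  ∑ j : Fin m → J, krausPow A j * σ * (krausPow A j)ᴴ

/-- A classical source on alphabet `Fin d`: each `p m` (for `m ≥ 1`) is a
probability distribution on words of length `m`. -/
def IsCSource (d : ℕ) (p : ∀ m, (Fin m → Fin d) → ℝ) : Prop :=
  ∀ m, 1 ≤ m → (∀ x, 0 ≤ p m x) ∧ ∑ x, p m x = 1

def CConsistent (d : ℕ) (p : ∀ m, (Fin m → Fin d) → ℝ) : Prop :=
  ∀ m i, 1 ≤ m → 1 ≤ i → ∀ x : Fin m → Fin d,
    p m x = ∑ y : Fin i → Fin d, p (m + i) (Fin.append x y)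

def CStationary (d : ℕ) (p : ∀ m, (Fin m → Fin d) → ℝ) : Prop :=
  ∀ m i, 1 ≤ m → 1 ≤ i → ∀ x : Fin m → Fin d,
    p m x = ∑ y : Fin i → Fin d, p (i + m) (Fin.append y x)

def CErgodic (d : ℕ) (p : ∀ m, (Fin m → Fin d) → ℝ) : Prop :=
  ∀ m, 1 ≤ m → ∀ x y : Fin m → Fin d,
    Tendsto (fun n : ℕ =>
        (n : ℝ)⁻¹ * ∑ i ∈ Finset.Icc m n,
          ∑ z : Fin (i - m) → Fin d, p (m + (i - m) + m) (Fin.append (Fin.append x z) y))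
      atTop (nhds (p m x * p m y))

def CWeakMixing (d : ℕ) (p : ∀ m, (Fin m → Fin d) → ℝ) : Prop :=
  ∀ m, 1 ≤ m → ∀ x y : Fin m → Fin d,
    Tendsto (fun n : ℕ =>
        (n : ℝ)⁻¹ * ∑ i ∈ Finset.Icc m n,
          |(∑ z : Fin (i - m) → Fin d, p (m + (i - m) + m) (Fin.append (Fin.append x z) y))
            - p m x * p m y|)
      atTop (nhds 0)

def CStrongMixing (d : ℕ) (p : ∀ m, (Fin m → Fin d) → ℝ) : Prop :=
  ∀ m, 1 ≤ m → ∀ x y : Fin m → Fin d,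
    Tendsto (fun i : ℕ =>
        ∑ z : Fin (i - m) → Fin d, p (m + (i - m) + m) (Fin.append (Fin.append x z) y))
      atTop (nhds (p m x * p m y))

/-- The classically correlated state `∑_x p(x) · ψ_{x 1}ψ_{x 1}† ⊗ ⋯ ⊗ ψ_{x m}ψ_{x m}†`. -/
def clsState {d : ℕ} (ψ : Fin d → Fin d → ℂ) {m : ℕ} (pm : (Fin m → Fin d) → ℝ) : Mat d m :=
  ∑ x : Fin m → Fin d, (pm x : ℂ) •
    Matrix.of (fun u v => ∏ k, ψ (x k) (u k) * star (ψ (x k) (v k)))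

/-- The probability `⟨u_{x 1} ⊗ ⋯ ⊗ u_{x m}, ρ (u_{x 1} ⊗ ⋯ ⊗ u_{x m})⟩` of
measurement outcome `x` in the product basis built from `u`. -/
def measProb {d m : ℕ} (ρ : Mat d m) (u : Fin d → Fin d → ℂ) (x : Fin m → Fin d) : ℝ :=
  (∑ v : Fin m → Fin d, ∑ w : Fin m → Fin d,
    star (∏ k, u (x k) (v k)) * ρ v w * ∏ k, u (x k) (w k)).re

/-- Von Neumann entropy (base-2) of a Hermitian matrix, via its eigenvalues;
junk value `0` for non-Hermitian input.  The convention `0·log₂ 0 = 0` holds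
automatically since `Real.logb 2 0 = 0`. -/
def vnEntropy {n : Type} [Fintype n] [DecidableEq n] (ρ : Matrix n n ℂ) : ℝ :=
  if h : ρ.IsHermitian then -∑ k, h.eigenvalues k * Real.logb 2 (h.eigenvalues k) else 0

/-!
Pass to the Heisenberg picture: `tr(E^{⊗n}(σ) X) = tr(σ E*^{⊗n}(X))` for the dual map
`E*^{⊗n}(X) = ∑ⱼ Aⱼ† X Aⱼ`. The dual map factorises over tensor products and is unital
because `∑ⱼ Aⱼ† Aⱼ = I`, so it sends `a ⊗ I^{⊗k} ⊗ b` to `E*(a) ⊗ I^{⊗k} ⊗ E*(b)`.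
Hence the correlations of the output source at `a, b` are those of the input source at
`E*(a), E*(b)`, and strong mixing transfers.
-/

lemma Fintype.sum_fin_add_pi {α M : Type*} [Fintype α] [AddCommMonoid M] {m i : ℕ}
    (F : (Fin (m + i) → α) → M) :
    ∑ z, F z = ∑ z₁ : Fin m → α, ∑ z₂ : Fin i → α, F (Fin.append z₁ z₂) := by
  rw [← (Fin.appendEquiv m i).sum_comp, Fintype.sum_prod_type]
  rfl

section Tensor

variable {d m i : ℕ}

lemma tens_mul_tens (A C : Mat d m) (B D : Mat d i) :
    tens A B * tens C D = tens (A * C) (B * D) := by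
  ext x y
  simp only [Matrix.mul_apply, tens, Matrix.of_apply, Fintype.sum_fin_add_pi (α := Fin d),
    Fin.append_left, Fin.append_right, Finset.sum_mul_sum]
  refine Finset.sum_congr rfl fun _ _ => Finset.sum_congr rfl fun _ _ => ?_
  ring

lemma conjTranspose_tens (A : Mat d m) (B : Mat d i) : (tens A B)ᴴ = tens Aᴴ Bᴴ := by
  ext x y
  simp [tens]

lemma sum_tens {ι : Type*} (s : Finset ι) (f : ι → Mat d m) (B : Mat d i) :
    tens (∑ j ∈ s, f j) B = ∑ j ∈ s, tens (f j) B := by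
  ext x y
  simp [tens, Matrix.sum_apply, Finset.sum_mul]

lemma tens_sum {ι : Type*} (s : Finset ι) (A : Mat d m) (g : ι → Mat d i) :
    tens A (∑ j ∈ s, g j) = ∑ j ∈ s, tens A (g j) := by
  ext x y
  simp [tens, Matrix.sum_apply, Finset.mul_sum]

lemma one_apply_eq_prod (x y : Fin m → Fin d) :
    (1 : Mat d m) x y = ∏ k, (1 : Matrix (Fin d) (Fin d) ℂ) (x k) (y k) := by
  simp [Matrix.one_apply, Fintype.prod_boole, funext_iff]

end Tensor

section Kraus

variable {d : ℕ} {J : Type} [Fintype J] (A : J → Matrix (Fin d) (Fin d) ℂ)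

lemma krausPow_append {m i : ℕ} (j₁ : Fin m → J) (j₂ : Fin i → J) :
    krausPow A (Fin.append j₁ j₂) = tens (krausPow A j₁) (krausPow A j₂) := by
  ext x y
  simp [krausPow, tens, Fin.prod_univ_add]

lemma conjTranspose_krausPow_mul_krausPow_apply {m : ℕ} (j : Fin m → J) (x y : Fin m → Fin d) :
    ((krausPow A j)ᴴ * krausPow A j) x y = ∏ k, ((A (j k))ᴴ * A (j k)) (x k) (y k) := by
  simp only [Matrix.mul_apply, Matrix.conjTranspose_apply, krausPow, Matrix.of_apply, star_prod,
    ← Finset.prod_mul_distrib]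
  exact (Fintype.prod_sum fun k z => star (A (j k) z (x k)) * A (j k) z (y k)).symm

variable {A} in
lemma sum_conjTranspose_krausPow_mul_krausPow (hA : ∑ j, (A j)ᴴ * A j = 1) (m : ℕ) :
    ∑ j : Fin m → J, (krausPow A j)ᴴ * krausPow A j = 1 := by
  ext x y
  rw [Matrix.sum_apply, one_apply_eq_prod, ← hA]
  simp only [conjTranspose_krausPow_mul_krausPow_apply, Matrix.sum_apply]
  exact (Fintype.prod_sum fun k j => ((A j)ᴴ * A j) (x k) (y k)).symm

def channelPowDual (m : ℕ) (X : Mat d m) : Mat d m :=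
  ∑ j : Fin m → J, (krausPow A j)ᴴ * X * krausPow A j

lemma trace_channelPow_mul (m : ℕ) (σ X : Mat d m) :
    (channelPow A m σ * X).trace = (σ * channelPowDual A m X).trace := by
  simp only [channelPow, channelPowDual, Finset.sum_mul, Finset.mul_sum, Matrix.trace_sum]
  refine Finset.sum_congr rfl fun j _ => ?_
  rw [mul_assoc, mul_assoc, Matrix.trace_mul_comm, ← mul_assoc, ← mul_assoc, ← mul_assoc]

lemma channelPowDual_tens {m i : ℕ} (X : Mat d m) (Y : Mat d i) :
    channelPowDual A (m + i) (tens X Y) = tens (channelPowDual A m X) (channelPowDual A i Y) := by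
  simp only [channelPowDual]
  rw [Fintype.sum_fin_add_pi, sum_tens]
  simp only [tens_sum, krausPow_append, conjTranspose_tens, tens_mul_tens]

variable {A} in
lemma channelPowDual_one (hA : ∑ j, (A j)ᴴ * A j = 1) (m : ℕ) :
    channelPowDual A m (1 : Mat d m) = 1 := by
  simpa only [channelPowDual, mul_one] using sum_conjTranspose_krausPow_mul_krausPow hA m

end Kraus

theorem channel_preserves_strong_mixing_general
    (d : ℕ) (J : Type) [Fintype J]
    (A : J → Matrix (Fin d) (Fin d) ℂ) (hA : ∑ j, (A j)ᴴ * A j = 1)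
    (ρ : ∀ m, Mat d m)
    (hsm : QStrongMixing d ρ) :
    QStrongMixing d (fun m => channelPow A m (ρ m)) := by
  intro m hm a b
  simp only [trace_channelPow_mul, channelPowDual_tens, channelPowDual_one hA]
  exact hsm m hm (channelPowDual A m a) (channelPowDual A m b)

/-- a memoryless channel maps a stationary strongly mixing quantum
source to a strongly mixing one. -/
theorem channel_preserves_strong_mixing
    (d : ℕ) (hd : 2 ≤ d) (J : Type) [Fintype J]
    (A : J → Matrix (Fin d) (Fin d) ℂ) (hA : ∑ j, (A j)ᴴ * A j = 1)
    (ρ : ∀ m, Mat d m) (hρ : IsQSource d ρ) (hstat : QStationary d ρ)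
    (hsm : QStrongMixing d ρ) :
    QStrongMixing d (fun m => channelPow A m (ρ m)) :=
  channel_preserves_strong_mixing_general d J A hA ρ hsm
end
end

section
/- Let ψ_1,…,ψ_d ∈ ℂ^d be linearly independent unit vectors and let p = (p_m)_{m≥1} be a consistent, stationary, and strongly mixing classical source on the alphabet Fin d. Then the classically correlated quantum source (ρ^{cls}_m)_{m≥1} is strongly mixing. -/
open Matrix Finset Filter Topology
open scoped ComplexOrder

noncomputable section

/-! Writing `ψ_x = ψ_{x 1} ⊗ ⋯ ⊗ ψ_{x m}`, the state is `ρ_m = ∑_x p_m(x) ψ_x ψ_x†`, so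
`tr(ρ_m A) = ∑_x p_m(x) ⟨ψ_x, A ψ_x⟩`. On a product observable `a ⊗ I ⊗ b` this expectation
factors, and the identity factor contributes `1` since the `ψ_i` are unit vectors. Hence
`tr(ρ(a ⊗ I^{⊗(i-m)} ⊗ b))` is a fixed finite linear combination of the classical correlations
`∑_z p(x z y)`, and classical strong mixing passes to the limit term by term. -/

section WordVectors

variable {α ι R : Type*}

def wordVec [CommMonoid R] (ψ : α → ι → R) {m : ℕ} (x : Fin m → α) : (Fin m → ι) → R :=
  fun u => ∏ k, ψ (x k) (u k)

lemma wordVec_append [CommMonoid R] (ψ : α → ι → R) {a b : ℕ} (x : Fin a → α) (y : Fin b → α)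
    (u : Fin a → ι) (v : Fin b → ι) :
    wordVec ψ (Fin.append x y) (Fin.append u v) = wordVec ψ x u * wordVec ψ y v := by
  simp [wordVec, Fin.prod_univ_add]

lemma star_wordVec [CommMonoid R] [StarMul R] (ψ : α → ι → R) {m : ℕ} (x : Fin m → α) :
    star (wordVec ψ x) = wordVec (star ψ) x := by
  ext u
  simp [wordVec, star_prod]

lemma wordVec_dotProduct_wordVec [CommSemiring R] [Fintype ι] (φ ψ : α → ι → R) {m : ℕ}
    (x : Fin m → α) : wordVec φ x ⬝ᵥ wordVec ψ x = ∏ k, φ (x k) ⬝ᵥ ψ (x k) := by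
  simp only [dotProduct, wordVec, ← prod_mul_distrib]
  exact (Fintype.prod_sum fun k j => φ (x k) j * ψ (x k) j).symm

lemma sum_fin_append [Fintype α] [AddCommMonoid R] {a b : ℕ} (f : (Fin (a + b) → α) → R) :
    ∑ x, f x = ∑ x : Fin a → α, ∑ y : Fin b → α, f (Fin.append x y) := by
  rw [← (Fin.appendEquiv a b).sum_comp, Fintype.sum_prod_type]
  rfl

end WordVectors

section ClassicallyCorrelated

variable {d : ℕ} (ψ : Fin d → Fin d → ℂ)

lemma tens_append_apply {a b : ℕ} (A : Mat d a) (B : Mat d b) (u v : Fin a → Fin d)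
    (u' v' : Fin b → Fin d) :
    tens A B (Fin.append u u') (Fin.append v v') = A u v * B u' v' := by
  simp [tens]

def wordExpect {m : ℕ} (A : Mat d m) (x : Fin m → Fin d) : ℂ :=
  star (wordVec ψ x) ⬝ᵥ A *ᵥ wordVec ψ x

lemma wordExpect_tens {a b : ℕ} (A : Mat d a) (B : Mat d b)
    (x : Fin a → Fin d) (y : Fin b → Fin d) :
    wordExpect ψ (tens A B) (Fin.append x y) = wordExpect ψ A x * wordExpect ψ B y := by
  simp only [wordExpect, star_wordVec, dotProduct, mulVec, sum_fin_append, wordVec_append,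
    tens_append_apply]
  rw [sum_mul_sum]
  refine sum_congr rfl fun u _ => sum_congr rfl fun u' _ => ?_
  simp only [mul_sum, sum_mul]
  rw [sum_comm]
  exact sum_congr rfl fun v _ => sum_congr rfl fun v' _ => by ring

lemma wordExpect_one (hunit : ∀ i, ∑ k, star (ψ i k) * ψ i k = 1)
    {m : ℕ} (x : Fin m → Fin d) : wordExpect ψ 1 x = 1 := by
  rw [wordExpect, one_mulVec, star_wordVec, wordVec_dotProduct_wordVec]
  exact prod_eq_one fun k _ => hunit (x k)

lemma clsState_eq_sum_vecMulVec {m : ℕ} (P : (Fin m → Fin d) → ℝ) :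
    clsState ψ P = ∑ x, (P x : ℂ) • vecMulVec (wordVec ψ x) (star (wordVec ψ x)) := by
  simp only [clsState, star_wordVec]
  refine sum_congr rfl fun x _ => ?_
  ext u v
  simp [wordVec, vecMulVec_apply, prod_mul_distrib]

lemma trace_clsState_mul {m : ℕ} (P : (Fin m → Fin d) → ℝ) (A : Mat d m) :
    (clsState ψ P * A).trace = ∑ x, (P x : ℂ) * wordExpect ψ A x := by
  simp only [clsState_eq_sum_vecMulVec, sum_mul, trace_sum, smul_mul, trace_smul, smul_eq_mul,
    vecMulVec_mul, trace_vecMulVec]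
  refine sum_congr rfl fun x _ => ?_
  rw [wordExpect, dotProduct_mulVec, dotProduct_comm]

lemma trace_clsState_mul_tens_one_tens (hunit : ∀ i, ∑ k, star (ψ i k) * ψ i k = 1)
    {m n m' : ℕ} (P : (Fin (m + n + m') → Fin d) → ℝ) (a : Mat d m) (b : Mat d m') :
    (clsState ψ P * tens (tens a (1 : Mat d n)) b).trace =
      ∑ x, ∑ y, ((∑ z, P (Fin.append (Fin.append x z) y) : ℝ) : ℂ) *
        (wordExpect ψ a x * wordExpect ψ b y) := by
  simp only [trace_clsState_mul, sum_fin_append, wordExpect_tens, wordExpect_one ψ hunit, mul_one,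
    Complex.ofReal_sum, sum_mul]
  exact sum_congr rfl fun x _ => sum_comm

lemma trace_clsState_mul_mul_trace_clsState_mul {m m' : ℕ}
    (P : (Fin m → Fin d) → ℝ) (Q : (Fin m' → Fin d) → ℝ) (a : Mat d m) (b : Mat d m') :
    (clsState ψ P * a).trace * (clsState ψ Q * b).trace =
      ∑ x, ∑ y, ((P x * Q y : ℝ) : ℂ) * (wordExpect ψ a x * wordExpect ψ b y) := by
  rw [trace_clsState_mul, trace_clsState_mul, sum_mul_sum]
  exact sum_congr rfl fun x _ => sum_congr rfl fun y _ => by push_cast; ring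

end ClassicallyCorrelated

theorem cls_source_strong_mixing_general
    (d : ℕ) (ψ : Fin d → Fin d → ℂ)
    (hunit : ∀ i, ∑ k, star (ψ i k) * ψ i k = 1)
    (p : ∀ m, (Fin m → Fin d) → ℝ) (hsm : CStrongMixing d p) :
    QStrongMixing d (fun m => clsState ψ (p m)) := by
  intro m hm a b
  simp only [trace_clsState_mul_tens_one_tens ψ hunit, trace_clsState_mul_mul_trace_clsState_mul]
  exact tendsto_finsetSum _ fun x _ => tendsto_finsetSum _ fun y _ =>
    ((Complex.continuous_ofReal.tendsto _).comp (hsm m hm x y)).mul_const _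

/-- a classically correlated quantum source built from a strongly
mixing classical source is strongly mixing. -/
theorem cls_source_strong_mixing
    (d : ℕ) (hd : 2 ≤ d) (ψ : Fin d → Fin d → ℂ)
    (hind : LinearIndependent ℂ ψ)
    (hunit : ∀ i, ∑ k, star (ψ i k) * ψ i k = 1)
    (p : ∀ m, (Fin m → Fin d) → ℝ) (hp : IsCSource d p)
    (hc : CConsistent d p) (hs : CStationary d p) (hsm : CStrongMixing d p) :
    QStrongMixing d (fun m => clsState ψ (p m)) :=
  cls_source_strong_mixing_general d ψ hunit p hsm
end
end
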